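/- arXiv:2306.14192 — 5 statements merged into one kernel-verified Lean document; each statement's English description precedes it below -/
import Mathlib

section
/- Let Σ be a finite alphabet, k ∈ ℕ₀, and let w, w' ∈ Σ* satisfy w ∼_k w'. Then either both w and w' have at least k arches, or w and w' have fewer than k arches and the same number of arches (equivalently, ι(w) = ι(w') whenever one of ι(w), ι(w') is < k, and ι(w) ≥ k iff ι(w') ≥ k). -/
open List

variable {α : Type*} [DecidableEq α] [Fintype α]

/-- Simon `k`-congruence: `u` and `v` have the same scattered factors
(subsequences) of length at most `k`. -/
def SimonCongr (k : ℕ) (u v : List α) : Prop :=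
  ∀ s : List α, s.length ≤ k → (s.Sublist u ↔ s.Sublist v)

/-- `w` is `k`-universal with respect to the alphabet `S`: every word of length `k`
over `S` is a scattered factor of `w`. -/
def UniversalOn (S : Finset α) (k : ℕ) (w : List α) : Prop :=
  ∀ s : List α, s.length = k → (∀ x ∈ s, x ∈ S) → s.Sublist w

/-- The universality index of `w` w.r.t. the alphabet `S`. -/
noncomputable def iotaOn (S : Finset α) (w : List α) : ℕ :=
  sSup {k | UniversalOn S k w}

/-- The universality index of `w` w.r.t. the full alphabet. -/
noncomputable def iotaUniv (w : List α) : ℕ := iotaOn Finset.univ w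

/-- `a` is an arch w.r.t. `S`: it contains every letter of `S`, and its last letter
belongs to `S` and occurs exactly once in `a`. -/
def IsArchOn (S : Finset α) (a : List α) : Prop :=
  (∀ x ∈ S, x ∈ a) ∧ ∃ a' x, a = a' ++ [x] ∧ x ∈ S ∧ x ∉ a'

/-- `(ars, r)` is the arch factorization of `w` w.r.t. `S`. -/
def IsArchFactOn (S : Finset α) (w : List α) (ars : List (List α)) (r : List α) : Prop :=
  w = ars.flatten ++ r ∧ (∀ a ∈ ars, IsArchOn S a) ∧ ¬ (∀ x ∈ S, x ∈ r)

/-- `(A, B)` is the α-β-factorization of `w` with `m` arches: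
`αᵢ₋₁βᵢ` (for `i ∈ [m]`) together with rest `α_m` is the arch factorization of `w`, and
`(β_{m-i}α_{m-i})^R` together with rest `α₀^R` is the arch factorization of `w^R`. -/
def IsAlphaBetaFact (w : List α) (m : ℕ) (A B : ℕ → List α) : Prop :=
  IsArchFactOn Finset.univ w (List.ofFn fun i : Fin m => A i.val ++ B (i.val + 1)) (A m) ∧
  IsArchFactOn Finset.univ w.reverse
    (List.ofFn fun i : Fin m => (B (m - i.val) ++ A (m - i.val)).reverse) ((A 0).reverse)

/-- The concatenation `αᵢ βᵢ₊₁ αᵢ₊₁ ⋯ βⱼ αⱼ`. -/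
def abSeg (A B : ℕ → List α) (i j : ℕ) : List α :=
  A i ++ (((List.Ico (i + 1) (j + 1)).map fun l => B l ++ A l).flatten)

/-- The core of a `β`-factor: the factor with its first and last letter removed. -/
def coreOf (b : List α) : List α := (b.drop 1).dropLast

lemma universalOn_mono' [Nonempty α] {m m' : ℕ} {w : List α}
    (h : UniversalOn (Finset.univ : Finset α) m w) (hle : m' ≤ m) :
    UniversalOn (Finset.univ : Finset α) m' w := by
  intro s hs _
  obtain ⟨a⟩ := ‹Nonempty α›
  have h2 := h (s ++ List.replicate (m - m') a) (by simp [hs]; omega) (by simp)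
  exact (List.sublist_append_left s _).trans h2

lemma universal_le_length' [Nonempty α] {m : ℕ} {w : List α}
    (h : UniversalOn (Finset.univ : Finset α) m w) : m ≤ w.length := by
  obtain ⟨a⟩ := ‹Nonempty α›
  have := h (List.replicate m a) (by simp) (by simp)
  simpa using this.length_le

lemma le_iota_iff' [Nonempty α] {k : ℕ} {w : List α} :
    k ≤ iotaUniv w ↔ UniversalOn (Finset.univ : Finset α) k w := by
  have hne : {m | UniversalOn (Finset.univ : Finset α) m w}.Nonempty :=
    ⟨0, by intro s hs _; simp [List.length_eq_zero_iff.mp hs]⟩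
  have hbdd : BddAbove {m | UniversalOn (Finset.univ : Finset α) m w} :=
    ⟨w.length, fun m hm => universal_le_length' hm⟩
  constructor
  · intro hk
    have hmem := Nat.sSup_mem hne hbdd
    exact universalOn_mono' hmem hk
  · intro hu
    exact le_csSup hbdd hu

lemma simon_universal' {k m : ℕ} {w w' : List α} (h : SimonCongr k w w') (hm : m ≤ k) :
    UniversalOn (Finset.univ : Finset α) m w ↔ UniversalOn (Finset.univ : Finset α) m w' := by
  constructor <;> intro hu s hs hall
  · exact (h s (hs ▸ hm)).mp (hu s hs hall)
  · exact (h s (hs ▸ hm)).mpr (hu s hs hall)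

/-- If `w ∼ₖ w'`, then either both have at least `k` arches
(i.e. `ι(w) ≥ k` iff `ι(w') ≥ k`), or both have fewer than `k` arches and
the same number of arches. -/
theorem simonCongr_iota (k : ℕ) (w w' : List α) (h : SimonCongr k w w') :
    (k ≤ iotaUniv w ↔ k ≤ iotaUniv w') ∧
    ((iotaUniv w < k ∨ iotaUniv w' < k) → iotaUniv w = iotaUniv w') := by
  rcases isEmpty_or_nonempty α with hα | hα
  · have hz : ∀ v : List α, iotaUniv v = 0 := by
      intro v
      have hset : {m | UniversalOn (Finset.univ : Finset α) m v} = Set.univ := by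
        ext m
        simp only [Set.mem_setOf_eq, Set.mem_univ, iff_true]
        intro s hs _
        cases s with
        | nil => exact List.nil_sublist v
        | cons a t => exact (IsEmpty.false a).elim
      have hnb : ¬ BddAbove (Set.univ : Set ℕ) := by
        rintro ⟨b, hb⟩
        have := hb (Set.mem_univ (b + 1))
        omega
      show sSup {m | UniversalOn (Finset.univ : Finset α) m v} = 0
      rw [hset, csSup_of_not_bddAbove hnb, csSup_empty]
      rfl
    simp [hz]
  · have h' : SimonCongr k w' w := fun s hs => (h s hs).symm
    constructor
    · rw [le_iota_iff', le_iota_iff']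
      exact simon_universal' h le_rfl
    · have key : ∀ (u v : List α), SimonCongr k u v → iotaUniv u < k → iotaUniv u = iotaUniv v := by
        intro u v hc hlt
        have h1 : UniversalOn (Finset.univ : Finset α) (iotaUniv u) u := le_iota_iff'.mp le_rfl
        have h2 : ¬ UniversalOn (Finset.univ : Finset α) (iotaUniv u + 1) u := by
          intro hu
          have := le_iota_iff'.mpr hu
          omega
        have h3 : iotaUniv u ≤ iotaUniv v :=
          le_iota_iff'.mpr ((simon_universal' hc (by omega)).mp h1)
        have h4 : ¬ (iotaUniv u + 1 ≤ iotaUniv v) := by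
          intro hle
          exact h2 ((simon_universal' hc (by omega)).mpr (le_iota_iff'.mp hle))
        omega
      rintro (hlt | hlt)
      · exact key w w' h hlt
      · exact (key w' w h' hlt).symm
end

section
/- Let Σ be a finite alphabet and w, w̃ ∈ Σ* with w ∼_k w̃ and ι(w) = ι(w̃) < k. Then for all 0 ≤ i ≤ j ≤ ι(w), the factors satisfy α_i β_{i+1} α_{i+1} ⋯ β_j α_j ∼_{k − ι(w) + j − i} α̃_i β̃_{i+1} α̃_{i+1} ⋯ β̃_j α̃_j, where α_l, β_l (resp. α̃_l, β̃_l) are the factors of the α-β-factorization of w (resp. w̃). -/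
/-!
Let `s` be a scattered factor of `αᵢβᵢ₊₁⋯βⱼαⱼ` of length at most `k - ι + j - i`. Pad `s` on
the left with one letter per arch `ar₁(w̃), …, arᵢ(w̃)`, namely the last letter of that arch,
which occurs only once in it, and on the right with one letter per reverse arch
`raⱼ₊₁(w̃), …, ra_ι(w̃)`, namely its first letter. Every arch of `w` contains every letter, so
the padded word, of length at most `k`, is a scattered factor of `w`, hence of `w̃`. In `w̃` the
leftmost embedding of the left padding must use up exactly the first `i` arches, and
symmetrically on the right, so `s` embeds into `α̃ᵢβ̃ᵢ₊₁⋯β̃ⱼα̃ⱼ`.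
-/

open List

variable {α : Type*} [DecidableEq α] [Fintype α]

section

-- A fresh `α`, so that the lemmas below do not pick up the instance arguments above.
variable {α : Type*}

namespace List

theorem cons_sublist_append_of_mem {x : α} {a t v : List α} (hx : x ∈ a) (ht : t <+ v) :
    x :: t <+ a ++ v :=
  cons_sublist_iff.mpr ⟨a, v, rfl, hx, ht⟩

theorem sublist_of_cons_sublist_append_cons {x : α} {p t v : List α} (hx : x ∉ p)
    (h : x :: t <+ p ++ x :: v) : t <+ v := by
  induction p with
  | nil => exact cons_sublist_cons.mp h
  | cons y p ih =>
    rcases sublist_cons_iff.mp h with h | ⟨r, hr, -⟩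
    · exact ih (fun hp => hx (mem_cons_of_mem y hp)) h
    · exact absurd ((cons.inj hr).1 ▸ mem_cons_self) hx

theorem append_sublist_flatten_append {as : List (List α)} {cs t v : List α}
    (hcs : ∀ a ∈ as, ∀ x ∈ cs, x ∈ a) (hlen : cs.length ≤ as.length) (ht : t <+ v) :
    cs ++ t <+ as.flatten ++ v := by
  induction as generalizing cs with
  | nil => simp_all
  | cons a as ih =>
    rcases cs with _ | ⟨c, cs⟩
    · exact ht.trans (sublist_append_right _ _)
    · rw [flatten_cons, append_assoc, cons_append]
      refine cons_sublist_append_of_mem (hcs a mem_cons_self c mem_cons_self) (ih ?_ ?_)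
      · exact fun b hb x hx => hcs b (mem_cons_of_mem a hb) x (mem_cons_of_mem c hx)
      · simpa using hlen

theorem append_sublist_append_flatten {as : List (List α)} {cs t v : List α}
    (hcs : ∀ a ∈ as, ∀ x ∈ cs, x ∈ a) (hlen : cs.length ≤ as.length) (ht : t <+ v) :
    t ++ cs <+ v ++ as.flatten := by
  rw [← reverse_sublist, reverse_append, reverse_append, reverse_flatten]
  refine append_sublist_flatten_append ?_ (by simpa using hlen) (reverse_sublist.mpr ht)
  simp only [mem_reverse, mem_map]
  rintro _ ⟨a, ha, rfl⟩ x hx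
  exact mem_reverse.mpr (hcs a ha x hx)

theorem exists_cancel_append_sublist_flatten_append {as : List (List α)}
    (has : ∀ a ∈ as, ∃ p x, a = p ++ [x] ∧ x ∉ p) :
    ∃ cs : List α, cs.length = as.length ∧
      ∀ t v : List α, cs ++ t <+ as.flatten ++ v → t <+ v := by
  induction as with
  | nil => exact ⟨[], rfl, fun t v h => by simpa using h⟩
  | cons a as ih =>
    obtain ⟨p, x, rfl, hx⟩ := has a mem_cons_self
    obtain ⟨cs, hlen, hcs⟩ := ih fun b hb => has b (mem_cons_of_mem _ hb)
    refine ⟨x :: cs, by simp [hlen], fun t v h => hcs t v ?_⟩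
    simpa using sublist_of_cons_sublist_append_cons hx (by simpa using h)

theorem exists_cancel_append_sublist_append_flatten {as : List (List α)}
    (has : ∀ a ∈ as, ∃ x q, a = x :: q ∧ x ∉ q) :
    ∃ ds : List α, ds.length = as.length ∧
      ∀ t v : List α, t ++ ds <+ v ++ as.flatten → t <+ v := by
  obtain ⟨cs, hlen, hcs⟩ := exists_cancel_append_sublist_flatten_append
    (as := (as.map reverse).reverse) (by
      simp only [mem_reverse, mem_map]
      rintro _ ⟨a, ha, rfl⟩
      obtain ⟨x, q, rfl, hx⟩ := has a ha
      exact ⟨q.reverse, x, by simp, by simpa using hx⟩)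
  refine ⟨cs.reverse, by simpa using hlen, fun t v h => ?_⟩
  rw [← reverse_sublist]
  apply hcs
  simpa [reverse_flatten] using reverse_sublist.mpr h

theorem flatten_map_range'_append (A B : ℕ → List α) (i n : ℕ) :
    ((range' i n).map fun l => A l ++ B (l + 1)).flatten ++ A (i + n) =
      A i ++ ((range' (i + 1) n).map fun l => B l ++ A l).flatten := by
  induction n generalizing i with
  | zero => simp
  | succ n ih =>
    simp only [range'_succ, map_cons, flatten_cons, append_assoc, ← ih (i + 1)]
    rw [Nat.add_right_comm, Nat.add_assoc]

end List

theorem abSeg_eq_flatten_append (A B : ℕ → List α) {i j : ℕ} (hij : i ≤ j) :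
    abSeg A B i j = ((range' i (j - i)).map fun l => A l ++ B (l + 1)).flatten ++ A j := by
  rw [abSeg, Ico, Nat.add_sub_add_right, ← flatten_map_range'_append, Nat.add_sub_cancel' hij]

theorem IsArchOn.exists_eq_cons_of_reverse {S : Finset α} {a : List α}
    (ha : IsArchOn S a.reverse) : ∃ x q, a = x :: q ∧ x ∉ q := by
  obtain ⟨p, x, hpx, -, hx⟩ := ha.2
  exact ⟨x, p.reverse, reverse_eq_concat.mp hpx, by simpa using hx⟩

theorem sublist_of_forall_sublist_flatten_append_append {k : ℕ}
    {ps ss ps' ss' : List (List α)} {M M' s : List α}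
    (hps : ∀ a ∈ ps, ∀ x, x ∈ a) (hss : ∀ a ∈ ss, ∀ x, x ∈ a)
    (hps' : ∀ a ∈ ps', ∃ p x, a = p ++ [x] ∧ x ∉ p)
    (hss' : ∀ a ∈ ss', ∃ x q, a = x :: q ∧ x ∉ q)
    (hlp : ps'.length = ps.length) (hls : ss'.length = ss.length)
    (h : ∀ u : List α, u.length ≤ k → u <+ ps.flatten ++ M ++ ss.flatten →
      u <+ ps'.flatten ++ M' ++ ss'.flatten)
    (hs : s <+ M) (hlen : ps.length + s.length + ss.length ≤ k) : s <+ M' := by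
  obtain ⟨cs, hcs_len, hcs⟩ := exists_cancel_append_sublist_flatten_append hps'
  obtain ⟨ds, hds_len, hds⟩ := exists_cancel_append_sublist_append_flatten hss'
  have hw : cs ++ s ++ ds <+ ps.flatten ++ M ++ ss.flatten :=
    append_sublist_append_flatten (fun a ha x _ => hss a ha x) (by omega)
      (append_sublist_flatten_append (fun a ha x _ => hps a ha x) (by omega) hs)
  have hw' := h _ (by simp only [length_append]; omega) hw
  exact hcs _ _ (hds _ _ hw')

namespace IsAlphaBetaFact

variable [Fintype α] {w w' : List α} {m : ℕ} {A B A' B' : ℕ → List α}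

theorem eq_flatten_append_abSeg_append (hw : IsAlphaBetaFact w m A B) {i j : ℕ}
    (hij : i ≤ j) (hjm : j ≤ m) :
    w = ((range i).map fun l => A l ++ B (l + 1)).flatten ++ abSeg A B i j ++
      ((range' (j + 1) (m - j)).map fun l => B l ++ A l).flatten := by
  have hofFn : ofFn (fun l : Fin m => A l ++ B (l + 1)) =
      (range' 0 i ++ range' i (j - i) ++ range' j (m - j)).map fun l => A l ++ B (l + 1) := by
    have hi : range' 0 i ++ range' i (j - i) = range' 0 j := by
      simpa [Nat.add_sub_cancel' hij] using range'_append_1 (s := 0) (m := i) (n := j - i)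
    have hj : range' 0 j ++ range' j (m - j) = range' 0 m := by
      simpa [Nat.add_sub_cancel' hjm] using range'_append_1 (s := 0) (m := j) (n := m - j)
    rw [hi, hj]
    exact ext_getElem (by simp) (by simp)
  calc w = (ofFn fun l : Fin m => A l ++ B (l + 1)).flatten ++ A m := hw.1.1
    _ = ((range i).map fun l => A l ++ B (l + 1)).flatten ++
          ((range' i (j - i)).map fun l => A l ++ B (l + 1)).flatten ++
          (((range' j (m - j)).map fun l => A l ++ B (l + 1)).flatten ++ A (j + (m - j))) := by
      simp [hofFn, range_eq_range', Nat.add_sub_cancel' hjm]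
    _ = _ := by
      rw [flatten_map_range'_append, abSeg_eq_flatten_append A B hij]
      simp

theorem isArchOn_of_mem_map_range (hw : IsAlphaBetaFact w m A B) {i : ℕ} (him : i ≤ m) :
    ∀ a ∈ (range i).map (fun l => A l ++ B (l + 1)), IsArchOn Finset.univ a := by
  simp only [mem_map, mem_range]
  rintro _ ⟨l, hl, rfl⟩
  exact hw.1.2.1 _ (mem_ofFn.mpr ⟨⟨l, by omega⟩, rfl⟩)

theorem isArchOn_reverse_of_mem_map_range' (hw : IsAlphaBetaFact w m A B) (j : ℕ) :
    ∀ a ∈ (range' (j + 1) (m - j)).map (fun l => B l ++ A l),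
      IsArchOn Finset.univ a.reverse := by
  simp only [mem_map, mem_range']
  rintro _ ⟨_, ⟨d, hd, rfl⟩, rfl⟩
  refine hw.2.2.1 _ (mem_ofFn.mpr ⟨⟨m - (j + 1 + d), by omega⟩, ?_⟩)
  simp only [show m - (m - (j + 1 + d)) = j + 1 + d by omega, one_mul]

theorem sublist_abSeg_of_forall_sublist (hw : IsAlphaBetaFact w m A B)
    (hw' : IsAlphaBetaFact w' m A' B') {k i j : ℕ} (hmk : m ≤ k) (hij : i ≤ j) (hjm : j ≤ m)
    (h : ∀ u : List α, u.length ≤ k → u <+ w → u <+ w') {s : List α}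
    (hs : s <+ abSeg A B i j) (hlen : s.length ≤ k - m + j - i) : s <+ abSeg A' B' i j := by
  rw [hw.eq_flatten_append_abSeg_append hij hjm, hw'.eq_flatten_append_abSeg_append hij hjm] at h
  refine sublist_of_forall_sublist_flatten_append_append ?_ ?_ ?_ ?_ (by simp) (by simp) h hs ?_
  · exact fun a ha x => (hw.isArchOn_of_mem_map_range (hij.trans hjm) a ha).1 x (Finset.mem_univ x)
  · exact fun a ha x =>
      mem_reverse.mp ((hw.isArchOn_reverse_of_mem_map_range' j a ha).1 x (Finset.mem_univ x))
  · intro a ha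
    obtain ⟨p, x, hpx, -, hx⟩ := (hw'.isArchOn_of_mem_map_range (hij.trans hjm) a ha).2
    exact ⟨p, x, hpx, hx⟩
  · exact fun a ha => (hw'.isArchOn_reverse_of_mem_map_range' j a ha).exists_eq_cons_of_reverse
  · simp only [length_map, length_range, length_range']
    omega

end IsAlphaBetaFact

end

theorem simonCongr_abSeg_general (k m : ℕ) (w w' : List α) (A B A' B' : ℕ → List α)
    (hw : IsAlphaBetaFact w m A B) (hw' : IsAlphaBetaFact w' m A' B')
    (hmk : m < k)
    (h : SimonCongr k w w') :
    ∀ i j : ℕ, i ≤ j → j ≤ m →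
      SimonCongr (k - m + j - i) (abSeg A B i j) (abSeg A' B' i j) := by
  intro i j hij hjm s hlen
  refine ⟨fun hs => ?_, fun hs => ?_⟩
  · exact hw.sublist_abSeg_of_forall_sublist hw' hmk.le hij hjm (fun u hu => (h u hu).1) hs hlen
  · exact hw'.sublist_abSeg_of_forall_sublist hw hmk.le hij hjm (fun u hu => (h u hu).2) hs hlen

/-- cutting arches from `k`-congruent words. -/
theorem simonCongr_abSeg (k m : ℕ) (w w' : List α) (A B A' B' : ℕ → List α)
    (hw : IsAlphaBetaFact w m A B) (hw' : IsAlphaBetaFact w' m A' B')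
    (hiw : iotaUniv w = m) (hiw' : iotaUniv w' = m) (hmk : m < k)
    (h : SimonCongr k w w') :
    ∀ i j : ℕ, i ≤ j → j ≤ m →
      SimonCongr (k - m + j - i) (abSeg A B i j) (abSeg A' B' i j) :=
  simonCongr_abSeg_general k m w w' A B A' B' hw hw' hmk h
end

section
/- Let Σ be a finite alphabet and w, w̃ ∈ Σ* with m := ι(w) = ι(w̃) < k such that β_i = β̃_i for all i ∈ [m]. Then w ∼_k w̃ if and only if α_i ∼_{k−m} α̃_i for all i ∈ {0,1,…,m}, where α_i, β_i (resp. α̃_i, β̃_i) are the factors of the α-β-factorizations of w and w̃. -/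
open List

variable {α : Type*} [DecidableEq α] [Fintype α]

/-
Write `w = α₀β₁α₁⋯β_mα_m`. The arch `α_{j-1}β_j` ends with the last letter of `β_j`, which
occurs nowhere else in it, and dually `β_jα_j` starts with a letter occurring only there. So
a scattered factor of `w` that starts with the last letters of `β₁, …, β_i` and ends with the
first letters of `β_{i+1}, …, β_m` must embed what lies between them into `α_i`. These
`m` probe letters depend only on the `β`'s, so `w ∼_k w̃` gives `α_i ∼_{k-m} α̃_i`.
Conversely, putting a word that contains every letter in front of or behind two
`j`-congruent words makes them `(j+1)`-congruent, so `α_i` can be replaced by `α̃_i` inside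
the `m` arches surrounding it, one index at a time.
-/

section SimonCongr

omit [DecidableEq α] [Fintype α]

variable {k : ℕ} {u v : List α}

theorem SimonCongr.symm (h : SimonCongr k u v) : SimonCongr k v u :=
  fun s hs => (h s hs).symm

theorem SimonCongr.trans {t : List α} (h₁ : SimonCongr k u v) (h₂ : SimonCongr k v t) :
    SimonCongr k u t :=
  fun s hs => (h₁ s hs).trans (h₂ s hs)

theorem SimonCongr.reverse (h : SimonCongr k u v) : SimonCongr k u.reverse v.reverse := by
  intro s hs
  rw [← reverse_sublist, reverse_reverse, ← reverse_sublist (l₂ := v.reverse), reverse_reverse]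
  exact h s.reverse (by rwa [length_reverse])

theorem SimonCongr.sublist_append_of_forall_mem {p : List α} (hp : ∀ x, x ∈ p)
    (h : SimonCongr k u v) {s : List α} (hs : s.length ≤ k + 1) (hsu : s <+ p ++ u) :
    s <+ p ++ v := by
  obtain ⟨s₁, s₂, rfl, hs₁, hs₂⟩ := sublist_append_iff.mp hsu
  by_cases hlen : s₂.length ≤ k
  · exact hs₁.append ((h s₂ hlen).mp hs₂)
  rw [length_append] at hs
  obtain rfl : s₁ = [] := eq_nil_of_length_eq_zero (by omega)
  obtain ⟨a, s', rfl⟩ := exists_cons_of_ne_nil (fun h : s₂ = [] => by simp [h] at hlen)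
  have hs'v : s' <+ v := (h s' (by rw [length_cons] at hs; omega)).mp ((sublist_cons_self a s').trans hs₂)
  exact (singleton_sublist.mpr (hp a)).append hs'v

theorem SimonCongr.append_of_forall_mem {p : List α} (hp : ∀ x, x ∈ p)
    (h : SimonCongr k u v) : SimonCongr (k + 1) (p ++ u) (p ++ v) :=
  fun _ hs => ⟨h.sublist_append_of_forall_mem hp hs, h.symm.sublist_append_of_forall_mem hp hs⟩

theorem SimonCongr.append_right_of_forall_mem {p : List α} (hp : ∀ x, x ∈ p)
    (h : SimonCongr k u v) : SimonCongr (k + 1) (u ++ p) (v ++ p) := by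
  simpa using (h.reverse.append_of_forall_mem (p := p.reverse) (by simpa using hp)).reverse

theorem SimonCongr.flatten_append {L : List (List α)} (hL : ∀ p ∈ L, ∀ x, x ∈ p)
    (h : SimonCongr k u v) : SimonCongr (k + L.length) (L.flatten ++ u) (L.flatten ++ v) := by
  induction L with
  | nil => simpa using h
  | cons p L ih =>
    have hp := (ih fun q hq => hL q (mem_cons_of_mem p hq)).append_of_forall_mem
      (hL p mem_cons_self)
    simpa only [flatten_cons, append_assoc, length_cons, ← add_assoc] using hp

theorem SimonCongr.append_flatten {L : List (List α)} (hL : ∀ p ∈ L, ∀ x, x ∈ p)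
    (h : SimonCongr k u v) : SimonCongr (k + L.length) (u ++ L.flatten) (v ++ L.flatten) := by
  induction L generalizing k u v with
  | nil => simpa using h
  | cons p L ih =>
    have hp := ih (fun q hq => hL q (mem_cons_of_mem p hq))
      (h.append_right_of_forall_mem (hL p mem_cons_self))
    simpa only [flatten_cons, append_assoc, length_cons, add_assoc, add_comm 1] using hp

end SimonCongr

section Embedding

omit [DecidableEq α] [Fintype α]

theorem cons_sublist_append_cons_iff {x : α} {c s t : List α} (hx : x ∉ c) :
    x :: s <+ c ++ x :: t ↔ s <+ t := by
  refine ⟨fun h => ?_, fun h => (h.cons_cons x).trans (sublist_append_right c _)⟩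
  obtain ⟨s₁, s₂, hs, hs₁, hs₂⟩ := sublist_append_iff.mp h
  cases s₁ with
  | nil =>
    rw [nil_append] at hs
    exact cons_sublist_cons.mp (hs ▸ hs₂)
  | cons y s₁ =>
    obtain ⟨rfl, -⟩ := cons_eq_cons.mp hs
    exact absurd (hs₁.subset mem_cons_self) hx

variable {ι : Type*} (f : ι → α) (g : ι → List α) {js : List ι} {s t : List α}

theorem map_append_sublist_flatten_append_iff
    (hg : ∀ j ∈ js, ∃ c, g j = c ++ [f j] ∧ f j ∉ c) :
    js.map f ++ s <+ (js.map g).flatten ++ t ↔ s <+ t := by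
  induction js with
  | nil => simp
  | cons j js ih =>
    obtain ⟨c, hc, hfc⟩ := hg j mem_cons_self
    rw [map_cons, map_cons, flatten_cons, hc, cons_append, append_assoc, append_assoc,
      singleton_append, cons_sublist_append_cons_iff hfc]
    exact ih fun j' hj' => hg j' (mem_cons_of_mem j hj')

theorem append_map_sublist_append_flatten_iff
    (hg : ∀ j ∈ js, ∃ c, g j = f j :: c ∧ f j ∉ c) :
    s ++ js.map f <+ t ++ (js.map g).flatten ↔ s <+ t := by
  have hrev := map_append_sublist_flatten_append_iff f (fun j => (g j).reverse)
    (js := js.reverse) (s := s.reverse) (t := t.reverse) fun j hj => by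
      obtain ⟨c, hc, hfc⟩ := hg j (mem_reverse.mp hj)
      exact ⟨c.reverse, by simp [hc], by simpa using hfc⟩
  rw [← reverse_sublist, ← reverse_sublist (l₁ := s)]
  simpa [reverse_flatten, map_reverse, Function.comp_def] using hrev

end Embedding

section Arches

omit [DecidableEq α] [Fintype α]

variable {S : Finset α} {u v : List α}

theorem IsArchOn.notMem_of_eq_append {x : α} (h : IsArchOn S (u ++ [x])) : x ∉ u := by
  obtain ⟨-, a', y, he, -, hy⟩ := h
  obtain ⟨rfl, hxy⟩ := append_inj' he rfl
  exact (singleton_inj.mp hxy) ▸ hy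

theorem IsArchOn.eq_nil_of_forall_mem (h : IsArchOn S (u ++ v)) (hu : ∀ x ∈ S, x ∈ u) :
    v = [] := by
  obtain ⟨-, a', y, he, hyS, hy⟩ := h
  obtain rfl | ⟨v', z, rfl⟩ := eq_nil_or_concat' v
  · rfl
  rw [← append_assoc] at he
  obtain ⟨rfl, -⟩ := append_inj' he rfl
  exact absurd (mem_append_left v' (hu y hyS)) hy

theorem ofFn_fin_val_eq_map_range {β : Type*} (F : ℕ → β) (m : ℕ) :
    (ofFn fun j : Fin m => F j) = (range m).map F := by
  rw [ofFn_eq_map, ← map_coe_finRange_eq_range, map_map]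
  rfl

/-- `α₀β₁ ⋯ α_{i-1}β_i` -/
def archPrefix (A B : ℕ → List α) (i : ℕ) : List α :=
  ((range i).map fun j => A j ++ B (j + 1)).flatten

/-- `β_{i+1}α_{i+1} ⋯ β_mα_m` -/
def archSuffix (A B : ℕ → List α) (i m : ℕ) : List α :=
  ((Ico i m).map fun j => B (j + 1) ++ A (j + 1)).flatten

variable {A B : ℕ → List α} {i m : ℕ}

theorem archPrefix_succ : archPrefix A B (i + 1) = archPrefix A B i ++ (A i ++ B (i + 1)) := by
  simp [archPrefix, range_succ]

theorem archSuffix_self : archSuffix A B m m = [] := by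
  simp [archSuffix]

theorem archSuffix_of_lt (h : i < m) :
    archSuffix A B i m = B (i + 1) ++ A (i + 1) ++ archSuffix A B (i + 1) m := by
  simp [archSuffix, Ico.eq_cons h]

theorem archPrefix_append_archSuffix (hi : i ≤ m) :
    archPrefix A B i ++ A i ++ archSuffix A B i m = archPrefix A B m ++ A m := by
  induction hi using Nat.decreasingInduction with
  | self => rw [archSuffix_self, append_nil]
  | of_succ i hi ih => rw [← ih, archPrefix_succ, archSuffix_of_lt hi]; simp only [append_assoc]

theorem SimonCongr.archPrefix_append_append_archSuffix {A B A' B' : ℕ → List α} {k : ℕ}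
    {u v : List α} (hpre : ∀ j < i, ∀ x, x ∈ A j ++ B (j + 1))
    (hsuf : ∀ j, i ≤ j → j < m → ∀ x, x ∈ B' (j + 1) ++ A' (j + 1)) (h : SimonCongr k u v) :
    SimonCongr (k + (m - i) + i) (archPrefix A B i ++ u ++ archSuffix A' B' i m)
      (archPrefix A B i ++ v ++ archSuffix A' B' i m) := by
  have hL : ∀ p ∈ (range i).map fun j => A j ++ B (j + 1), ∀ x, x ∈ p := by
    simpa using hpre
  have hR : ∀ p ∈ (Ico i m).map fun j => B' (j + 1) ++ A' (j + 1), ∀ x, x ∈ p := by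
    simp only [mem_map, Ico.mem]
    rintro _ ⟨j, ⟨hij, hjm⟩, rfl⟩
    exact hsuf j hij hjm
  simpa [archPrefix, archSuffix, append_assoc] using (h.append_flatten hR).flatten_append hL

end Arches

namespace IsAlphaBetaFact

omit [DecidableEq α]

variable {w : List α} {m : ℕ} {A B : ℕ → List α} (hw : IsAlphaBetaFact w m A B)
include hw

theorem congr_beta {B' : ℕ → List α} (hB : ∀ i, 1 ≤ i → i ≤ m → B i = B' i) :
    IsAlphaBetaFact w m A B' := by
  have hpre : (ofFn fun j : Fin m => A j ++ B' (j + 1)) = ofFn fun j : Fin m => A j ++ B (j + 1) :=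
    congrArg ofFn (funext fun j => by rw [hB (j + 1) (by omega) (by omega)])
  have hsuf : (ofFn fun j : Fin m => (B' (m - j) ++ A (m - j)).reverse) =
      ofFn fun j : Fin m => (B (m - j) ++ A (m - j)).reverse :=
    congrArg ofFn (funext fun j => by rw [hB (m - j) (by omega) (by omega)])
  exact ⟨hpre ▸ hw.1, hsuf ▸ hw.2⟩

theorem eq_archPrefix_append : w = archPrefix A B m ++ A m := by
  simpa [ofFn_fin_val_eq_map_range (fun j => A j ++ B (j + 1)), archPrefix] using hw.1.1

theorem eq_archPrefix_append_append_archSuffix {i : ℕ} (hi : i ≤ m) :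
    w = archPrefix A B i ++ A i ++ archSuffix A B i m := by
  rw [archPrefix_append_archSuffix hi, ← hw.eq_archPrefix_append]

theorem isArchOn {j : ℕ} (hj : j < m) : IsArchOn Finset.univ (A j ++ B (j + 1)) := by
  refine hw.1.2.1 _ ?_
  rw [ofFn_fin_val_eq_map_range (fun j => A j ++ B (j + 1))]
  exact mem_map_of_mem (mem_range.mpr hj)

theorem isArchOn_reverse {j : ℕ} (hj : j < m) :
    IsArchOn Finset.univ (B (j + 1) ++ A (j + 1)).reverse := by
  have hmem := hw.2.2.1 _ (by
    rw [ofFn_fin_val_eq_map_range (fun t => (B (m - t) ++ A (m - t)).reverse)]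
    exact mem_map_of_mem (mem_range.mpr (show m - (j + 1) < m by omega)))
  rwa [show m - (m - (j + 1)) = j + 1 by omega] at hmem

theorem forall_mem_arch {j : ℕ} (hj : j < m) (x : α) : x ∈ A j ++ B (j + 1) :=
  (hw.isArchOn hj).1 x (Finset.mem_univ x)

theorem forall_mem_reverse_arch {j : ℕ} (hj : j < m) (x : α) : x ∈ B (j + 1) ++ A (j + 1) :=
  mem_reverse.mp ((hw.isArchOn_reverse hj).1 x (Finset.mem_univ x))

theorem not_forall_mem_rest : ¬ ∀ x, x ∈ A m :=
  fun h => hw.1.2.2 fun x _ => h x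

theorem beta_ne_nil {j : ℕ} (hj : j < m) : B (j + 1) ≠ [] := by
  intro hB
  -- an empty `β` makes the next `α` contain every letter, hence the next `β` empty as well
  have hall : ∀ l, j + 1 ≤ l → l ≤ m → ∀ x, x ∈ A l := by
    intro l hjl
    induction l, hjl using Nat.le_induction with
    | base => simpa [hB] using fun _ => hw.forall_mem_reverse_arch hj
    | succ l hjl ih =>
      intro hl
      have hBl : B (l + 1) = [] :=
        (hw.isArchOn (by omega)).eq_nil_of_forall_mem fun x _ => ih (by omega) x
      simpa [hBl] using hw.forall_mem_reverse_arch (j := l) (by omega)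
  exact hw.not_forall_mem_rest (hall m (by omega) le_rfl)

theorem probe_sublist_iff (q p : ℕ → α) (hq : ∀ j < m, ∃ c, B (j + 1) = c ++ [q j])
    (hp : ∀ j < m, ∃ c, B (j + 1) = p j :: c) {i : ℕ} (hi : i ≤ m) (s : List α) :
    (range i).map q ++ s ++ (Ico i m).map p <+ w ↔ s <+ A i := by
  rw [hw.eq_archPrefix_append_append_archSuffix hi, append_assoc, append_assoc, archPrefix,
    archSuffix, map_append_sublist_flatten_append_iff q _ ?last,
    append_map_sublist_append_flatten_iff p _ ?first]
  case last =>
    intro j hj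
    have hjm : j < m := lt_of_lt_of_le (mem_range.mp hj) hi
    obtain ⟨c, hc⟩ := hq j hjm
    have hjc : A j ++ B (j + 1) = A j ++ c ++ [q j] := by rw [hc, append_assoc]
    exact ⟨A j ++ c, hjc, (hjc ▸ hw.isArchOn hjm).notMem_of_eq_append⟩
  case first =>
    intro j hj
    have hjm : j < m := (Ico.mem.mp hj).2
    obtain ⟨c, hc⟩ := hp j hjm
    have hjc : (B (j + 1) ++ A (j + 1)).reverse = (c ++ A (j + 1)).reverse ++ [p j] := by
      simp [hc]
    refine ⟨c ++ A (j + 1), by rw [hc, cons_append], fun hpc => ?_⟩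
    exact (hjc ▸ hw.isArchOn_reverse hjm).notMem_of_eq_append (mem_reverse.mpr hpc)

variable {w' : List α} {A' : ℕ → List α} {k : ℕ} (hw' : IsAlphaBetaFact w' m A' B)
include hw'

theorem simonCongr_alpha_of_simonCongr (hmk : m ≤ k) (h : SimonCongr k w w') {i : ℕ}
    (hi : i ≤ m) : SimonCongr (k - m) (A i) (A' i) := by
  intro s hs
  obtain ⟨a, -⟩ := not_forall.mp hw.not_forall_mem_rest
  have : Inhabited α := ⟨a⟩
  choose! c q hq using fun j (hj : j < m) =>
    (eq_nil_or_concat' (B (j + 1))).resolve_left (hw.beta_ne_nil hj)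
  choose! p d hp using fun j (hj : j < m) => exists_cons_of_ne_nil (hw.beta_ne_nil hj)
  have hlen : ((range i).map q ++ s ++ (Ico i m).map p).length ≤ k := by
    simp only [length_append, length_map, length_range, Ico.length]
    omega
  rw [← hw.probe_sublist_iff q p (fun j hj => ⟨_, hq j hj⟩) (fun j hj => ⟨_, hp j hj⟩) hi,
    ← hw'.probe_sublist_iff q p (fun j hj => ⟨_, hq j hj⟩) (fun j hj => ⟨_, hp j hj⟩) hi]
  exact h _ hlen

theorem simonCongr_of_simonCongr_alpha (hmk : m ≤ k)
    (hA : ∀ i ≤ m, SimonCongr (k - m) (A i) (A' i)) : SimonCongr k w w' := by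
  have hstep : ∀ i ≤ m, SimonCongr k (archPrefix A' B i ++ A i ++ archSuffix A B i m)
      (archPrefix A' B i ++ A' i ++ archSuffix A B i m) := fun i hi => by
    simpa [show k - m + (m - i) + i = k by omega] using
      (hA i hi).archPrefix_append_append_archSuffix (i := i) (m := m)
        (fun j hj => hw'.forall_mem_arch (by omega)) fun j _ hj => hw.forall_mem_reverse_arch hj
  have hchain : ∀ i ≤ m, SimonCongr k w (archPrefix A' B i ++ A' i ++ archSuffix A B i m) := by
    intro i hi
    induction i with
    | zero =>
      rw [hw.eq_archPrefix_append_append_archSuffix (Nat.zero_le m)]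
      exact hstep 0 (Nat.zero_le m)
    | succ i ih =>
      have hshift : archPrefix A' B i ++ A' i ++ archSuffix A B i m =
          archPrefix A' B (i + 1) ++ A (i + 1) ++ archSuffix A B (i + 1) m := by
        simp only [archPrefix_succ, archSuffix_of_lt (show i < m by omega), append_assoc]
      exact (ih (by omega)).trans (hshift ▸ hstep (i + 1) hi)
  simpa [archSuffix_self, ← hw'.eq_archPrefix_append] using hchain m le_rfl

end IsAlphaBetaFact

theorem simonCongr_iff_alpha_congr_general (k m : ℕ) (w w' : List α) (A B A' B' : ℕ → List α)
    (hw : IsAlphaBetaFact w m A B) (hw' : IsAlphaBetaFact w' m A' B') (hmk : m < k)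
    (hB : ∀ i, 1 ≤ i → i ≤ m → B i = B' i) :
    SimonCongr k w w' ↔ ∀ i ≤ m, SimonCongr (k - m) (A i) (A' i) := by
  have hw'B : IsAlphaBetaFact w' m A' B := hw'.congr_beta fun i h₁ h₂ => (hB i h₁ h₂).symm
  exact ⟨fun h _ hi => hw.simonCongr_alpha_of_simonCongr hw'B hmk.le h hi,
    hw.simonCongr_of_simonCongr_alpha hw'B hmk.le⟩

/-- with identical `β`-factors, `w ∼ₖ w̃` iff all `α`-factors are
`(k−m)`-congruent. -/
theorem simonCongr_iff_alpha_congr (k m : ℕ) (w w' : List α) (A B A' B' : ℕ → List α)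
    (hw : IsAlphaBetaFact w m A B) (hw' : IsAlphaBetaFact w' m A' B')
    (hiw : iotaUniv w = m) (hiw' : iotaUniv w' = m) (hmk : m < k)
    (hB : ∀ i, 1 ≤ i → i ≤ m → B i = B' i) :
    SimonCongr k w w' ↔ ∀ i ≤ m, SimonCongr (k - m) (A i) (A' i) :=
  simonCongr_iff_alpha_congr_general k m w w' A B A' B' hw hw' hmk hB
end

section
/- Let Σ be a finite alphabet, k ∈ ℕ, and w ∈ Σ* such that the Simon congruence class [w]_{∼_k} = { w' ∈ Σ* : w' ∼_k w } is infinite. Then there exists a letter x ∈ Σ such that x^k (the word consisting of k copies of x) is a scattered factor of w. -/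
open List

variable {α : Type*} [DecidableEq α] [Fintype α]

/-! If no `x^k` is a scattered factor of `w`, then no `x^k` is one of any `w' ∼_k w` either,
so every letter occurs fewer than `k` times in `w'`. Such words have length at most
`k · |Σ|`, and there are only finitely many of them. -/

lemma List.length_le_card_mul_of_forall_count_le {n : ℕ} {l : List α}
    (h : ∀ x, l.count x ≤ n) : l.length ≤ Fintype.card α * n := by
  calc l.length = ∑ x, l.count x := by
        simpa using (Multiset.sum_count_eq_card (s := Finset.univ) (m := (l : Multiset α))
          fun x _ => Finset.mem_univ x).symm
    _ ≤ Fintype.card α * n := Finset.sum_le_card_nsmul _ _ _ fun x _ => h x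

lemma finite_setOf_forall_count_lt (k : ℕ) : {l : List α | ∀ x, l.count x < k}.Finite :=
  (List.finite_length_le α (Fintype.card α * k)).subset fun _ hl =>
    List.length_le_card_mul_of_forall_count_le fun x => (hl x).le

lemma SimonCongr.count_lt_of_not_replicate_sublist {β : Type*} [DecidableEq β] {k : ℕ}
    {u v : List β} {x : β}
    (huv : SimonCongr k u v) (hv : ¬ (List.replicate k x).Sublist v) : u.count x < k := by
  by_contra! hu
  exact hv ((huv _ (List.length_replicate ▸ le_rfl)).mp (List.replicate_sublist_iff.mpr hu))

theorem infinite_class_contains_power_general (k : ℕ) (w : List α)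
    (h : {w' : List α | SimonCongr k w' w}.Infinite) :
    ∃ x : α, (List.replicate k x).Sublist w := by
  by_contra! hw
  exact h ((finite_setOf_forall_count_lt k).subset fun _ hw' x =>
    SimonCongr.count_lt_of_not_replicate_sublist hw' (hw x))

/-- if the Simon congruence class of `w` is infinite, then `w`
contains `x^k` as a scattered factor for some letter `x`. -/
theorem infinite_class_contains_power (k : ℕ) (hk : 1 ≤ k) (w : List α)
    (h : {w' : List α | SimonCongr k w' w}.Infinite) :
    ∃ x : α, (List.replicate k x).Sublist w :=
  infinite_class_contains_power_general k w h
end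

section
/- For k ∈ ℕ and 0 ≤ m < k, let D_{k,m} be the 3×3 integer matrix with rows (k−m, k−m, k−m), (1, 2, 1), (k−m, k−m, k−m) and let e_{k,m} := (k−m, 1, k−m)ᵀ, and define N(k,m) := ‖D_{k,m}^m · e_{k,m}‖₁ (sum of entries). Let c be defined by the recurrence c_k^{−1} := 1, c_k^0 := 2k+1, and c_k^m := 2(k−m+1)·c_{k−1}^{m−1} − 2(k−m)·c_{k−2}^{m−2} for m ≥ 1. Then N(k,m) = c_k^m for all k ∈ ℕ and 0 ≤ m < k. -/
open Matrix


/-- The 3×3 matrix with rows `(k−m, k−m, k−m)`, `(1, 2, 1)`, `(k−m, k−m, k−m)`. -/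
def matD (k m : ℕ) : Matrix (Fin 3) (Fin 3) ℤ :=
  !![(k : ℤ) - (m : ℤ), (k : ℤ) - (m : ℤ), (k : ℤ) - (m : ℤ);
     1, 2, 1;
     (k : ℤ) - (m : ℤ), (k : ℤ) - (m : ℤ), (k : ℤ) - (m : ℤ)]

/-- The column vector `(k−m, 1, k−m)ᵀ`. -/
def vecE (k m : ℕ) : Fin 3 → ℤ := ![(k : ℤ) - (m : ℤ), 1, (k : ℤ) - (m : ℤ)]

/-- `csim k n` is `c_k^{n-1}`, i.e. the second argument is shifted by one so that
`csim k 0 = c_k^{−1} = 1`, `csim k 1 = c_k^0 = 2k+1`, and for `m ≥ 1`,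
`csim k (m+1) = c_k^m = 2(k−m+1)·c_{k−1}^{m−1} − 2(k−m)·c_{k−2}^{m−2}`. -/
def csim : ℕ → ℕ → ℤ
  | _, 0 => 1
  | k, 1 => 2 * (k : ℤ) + 1
  | k, (n + 2) =>
      2 * ((k : ℤ) - ((n : ℤ) + 1) + 1) * csim (k - 1) (n + 1)
        - 2 * ((k : ℤ) - ((n : ℤ) + 1)) * csim (k - 2) n

/-- Matrix depending only on `a = k - m`. -/
def Mm (a : ℕ) : Matrix (Fin 3) (Fin 3) ℤ :=
  !![(a : ℤ), a, a; 1, 2, 1; (a : ℤ), a, a]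

def vv (a : ℕ) : Fin 3 → ℤ := ![(a : ℤ), 1, a]

lemma key (a : ℕ) :
    (Mm a) ^ 2 *ᵥ vv a
      = (2 * (a : ℤ) + 2) • ((Mm a) *ᵥ vv a) - (2 * (a : ℤ)) • vv a := by
  funext i
  fin_cases i <;>
    simp [Mm, vv, pow_succ, Matrix.mulVec, dotProduct, Fin.sum_univ_three,
      Matrix.mul_apply] <;> ring

lemma step (a n : ℕ) :
    (Mm a) ^ (n + 2) *ᵥ vv a
      = (2 * (a : ℤ) + 2) • ((Mm a) ^ (n + 1) *ᵥ vv a)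
        - (2 * (a : ℤ)) • ((Mm a) ^ n *ᵥ vv a) := by
  have h : (Mm a) ^ (n + 2) = (Mm a) ^ n * (Mm a) ^ 2 := by
    rw [← pow_add]
  have h1 : (Mm a) ^ (n + 1) = (Mm a) ^ n * (Mm a) := by
    rw [← pow_succ]
  rw [h, ← Matrix.mulVec_mulVec, key, h1, ← Matrix.mulVec_mulVec]
  rw [Matrix.mulVec_sub, Matrix.mulVec_smul, Matrix.mulVec_smul]

lemma grec (a n : ℕ) :
    csim (a + n + 2) (n + 3) =
      2 * ((a : ℤ) + 1) * csim (a + n + 1) (n + 2) - 2 * (a : ℤ) * csim (a + n) (n + 1) := by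
  show csim (a + n + 2) ((n + 1) + 2) = _
  rw [csim]
  have e1 : a + n + 2 - 1 = a + n + 1 := by omega
  have e2 : a + n + 2 - 2 = a + n := by omega
  rw [e1, e2]
  push_cast
  ring_nf

lemma main (a : ℕ) : ∀ n, (∑ i, ((Mm a) ^ n).mulVec (vv a) i) = csim (a + n) (n + 1) := by
  intro n
  induction n using Nat.twoStepInduction with
  | zero =>
    simp [vv, Fin.sum_univ_three, csim]
    ring
  | one =>
    have h2 : csim (a + 1) 2 = 2 * ((a : ℤ) + 1) * (2 * (a : ℤ) + 1) - 2 * (a : ℤ) := by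
      show csim (a + 1) (0 + 2) = _
      rw [csim]
      have e1 : a + 1 - 1 = a := by omega
      rw [e1]
      simp [csim]
      try push_cast
      try ring
    rw [show a + (0 + 1) = a + 1 from rfl, show (0 : ℕ) + 1 + 1 = 2 from rfl, h2]
    simp [Mm, vv, Fin.sum_univ_three, Matrix.mulVec, dotProduct, pow_one]
    try ring
  | more n ih ih1 =>
    have hs := step a n
    have : (∑ i, ((Mm a) ^ (n + 2)).mulVec (vv a) i)
        = (2 * (a : ℤ) + 2) * (∑ i, ((Mm a) ^ (n + 1)).mulVec (vv a) i)
          - 2 * (a : ℤ) * (∑ i, ((Mm a) ^ n).mulVec (vv a) i) := by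
      rw [show ((Mm a) ^ (n + 2)).mulVec (vv a) = _ from hs]
      simp [Finset.sum_sub_distrib, Finset.mul_sum, smul_eq_mul]
    rw [this, ih, ih1]
    have := grec a n
    rw [show a + (n + 2) = a + n + 2 from by ring, show a + (n + 1) = a + n + 1 from by ring]
    rw [this]
    ring

/-- `‖D_{k,m}^m · e_{k,m}‖₁ = c_k^m` for all `k ≥ 1` and `0 ≤ m < k`. -/
theorem matrix_formula_eq_recurrence (k m : ℕ) (hk : 1 ≤ k) (hm : m < k) :
    (∑ i, ((matD k m) ^ m).mulVec (vecE k m) i) = csim k (m + 1) := by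
  have hle : m ≤ k := hm.le
  have hcast : (k : ℤ) - (m : ℤ) = ((k - m : ℕ) : ℤ) := by
    push_cast [Nat.cast_sub hle]; ring
  have hM : matD k m = Mm (k - m) := by
    simp [matD, Mm, hcast]
  have hv : vecE k m = vv (k - m) := by
    simp [vecE, vv, hcast]
  rw [hM, hv]
  have := main (k - m) m
  rwa [Nat.sub_add_cancel hle] at this
end
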